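/- For every integer m ≥ 1 the function G_m is (2m−2)-times continuously differentiable on ℝ; on ℝ∖{0} it is infinitely differentiable and satisfies the differential equation G_m^{(2m)}(x) = G_m^{(2m−2)}(x); and its (2m−1)st derivative has a jump of size 1 at the origin: lim_{x→0+} G_m^{(2m−1)}(x) − lim_{x→0−} G_m^{(2m−1)}(x) = 1. (Thus G_m is a fundamental solution of the operator d^{2m}/dx^{2m} − d^{2m−2}/dx^{2m−2}.) -/

import Mathlib

/-- `G_m(x) = (sgn x)/2 · ((eˣ − e⁻ˣ)/2 − Σ_{k=1}^{m−1} x^{2k−1}/(2k−1)!)`, with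
`sgn 0 = 0` and the sum empty for `m = 1`, so that `G₁(x) = sgn(x)(eˣ−e⁻ˣ)/4`. -/
noncomputable def Gm (m : ℕ) (x : ℝ) : ℝ :=
  Real.sign x / 2 * ((Real.exp x - Real.exp (-x)) / 2
    - ∑ k ∈ Finset.range (m - 1), x ^ (2 * k + 1) / (Nat.factorial (2 * k + 1)))

/-!
Write `G_{m+1} = sign · R_m / 2`, where `R_m` is `sinh` minus its Taylor polynomial of
degree `2m - 1`, and `C_m = R_m'` is the corresponding tail of `cosh`. For `m ≥ 1` both `R_m`
and `C_m` vanish at `0`, and `sign · f` is differentiable with derivative `sign · f'` as soon as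
`f` and `f'` vanish at `0`. Hence `G_{m+2}'' = G_{m+1}` on all of `ℝ`, and every claim reduces to
`G_1 = sign · sinh / 2`: it is continuous, satisfies `G_1'' = G_1` off `0`, and
`G_1' = sign · cosh / 2` jumps by `cosh 0 = 1` at the origin.
-/

open Real Filter Set Topology Finset Nat

namespace Real

lemma sign_eventuallyEq_of_ne {x : ℝ} (hx : x ≠ 0) : sign =ᶠ[𝓝 x] fun _ => sign x := by
  rcases hx.lt_or_gt with hx | hx
  · filter_upwards [Iio_mem_nhds hx] with y hy
    rw [sign_of_neg hy, sign_of_neg hx]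
  · filter_upwards [Ioi_mem_nhds hx] with y hy
    rw [sign_of_pos hy, sign_of_pos hx]

lemma abs_sign_le_one (x : ℝ) : |sign x| ≤ 1 := by
  rcases sign_apply_eq x with h | h | h <;> simp [h]

end Real

section SignMul

variable {f : ℝ → ℝ}

lemma sign_mul_eventuallyEq_of_ne {x : ℝ} (hx : x ≠ 0) :
    (fun y => sign y * f y) =ᶠ[𝓝 x] fun y => sign x * f y :=
  (sign_eventuallyEq_of_ne hx).mono fun y hy => congrArg (· * f y) hy

lemma continuous_sign_mul (hf : Continuous f) (h0 : f 0 = 0) :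
    Continuous fun x => sign x * f x := by
  refine continuous_iff_continuousAt.2 fun x => ?_
  rcases eq_or_ne x 0 with rfl | hx
  · rw [ContinuousAt, sign_zero, zero_mul]
    refine squeeze_zero_norm (a := fun y => ‖f y‖) (fun y => ?_) ?_
    · rw [norm_mul]
      exact mul_le_of_le_one_left (norm_nonneg _) (abs_sign_le_one y)
    · simpa [h0] using (hf.tendsto 0).norm
  · exact (hf.continuousAt.const_mul _).congr (sign_mul_eventuallyEq_of_ne hx).symm

lemma contDiffAt_sign_mul_of_ne {n : WithTop ℕ∞} {x : ℝ} (hf : ContDiffAt ℝ n f x)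
    (hx : x ≠ 0) : ContDiffAt ℝ n (fun y => sign y * f y) x :=
  (contDiffAt_const.mul hf).congr_of_eventuallyEq (sign_mul_eventuallyEq_of_ne hx)

lemma hasDerivAt_sign_mul_of_ne {f' x : ℝ} (hf : HasDerivAt f f' x) (hx : x ≠ 0) :
    HasDerivAt (fun y => sign y * f y) (sign x * f') x :=
  (hf.const_mul _).congr_of_eventuallyEq (sign_mul_eventuallyEq_of_ne hx)

lemma hasDerivAt_sign_mul_zero (hf : HasDerivAt f 0 0) (h0 : f 0 = 0) :
    HasDerivAt (fun y => sign y * f y) 0 0 := by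
  rw [hasDerivAt_iff_isLittleO] at hf ⊢
  simp only [h0, sign_zero, zero_mul, sub_zero, smul_zero] at hf ⊢
  refine (Asymptotics.isBigO_of_le _ fun y => ?_).trans_isLittleO hf
  rw [norm_mul]
  exact mul_le_of_le_one_left (norm_nonneg _) (abs_sign_le_one y)

lemma hasDerivAt_sign_mul {f' : ℝ → ℝ} (hf : ∀ x, HasDerivAt f (f' x) x) (h0 : f 0 = 0)
    (h0' : f' 0 = 0) (x : ℝ) : HasDerivAt (fun y => sign y * f y) (sign x * f' x) x := by
  rcases eq_or_ne x 0 with rfl | hx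
  · rw [sign_zero, zero_mul]
    exact hasDerivAt_sign_mul_zero ((hf 0).congr_deriv h0') h0
  · exact hasDerivAt_sign_mul_of_ne (hf x) hx

lemma tendsto_sign_mul_nhdsGT (hf : ContinuousAt f 0) :
    Tendsto (fun x => sign x * f x) (𝓝[>] 0) (𝓝 (f 0)) := by
  refine (hf.tendsto.mono_left nhdsWithin_le_nhds).congr' ?_
  filter_upwards [self_mem_nhdsWithin] with x hx
  rw [sign_of_pos hx, one_mul]

lemma tendsto_sign_mul_nhdsLT (hf : ContinuousAt f 0) :
    Tendsto (fun x => sign x * f x) (𝓝[<] 0) (𝓝 (-f 0)) := by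
  refine (hf.tendsto.mono_left nhdsWithin_le_nhds).neg.congr' ?_
  filter_upwards [self_mem_nhdsWithin] with x hx
  rw [sign_of_neg hx, neg_one_mul]

end SignMul

noncomputable def sinhTail (n : ℕ) (x : ℝ) : ℝ :=
  sinh x - ∑ k ∈ range n, x ^ (2 * k + 1) / ((2 * k + 1)! : ℝ)

noncomputable def coshTail (n : ℕ) (x : ℝ) : ℝ :=
  cosh x - ∑ k ∈ range n, x ^ (2 * k) / ((2 * k)! : ℝ)

lemma hasDerivAt_pow_div_factorial (n : ℕ) (x : ℝ) :
    HasDerivAt (fun y => y ^ (n + 1) / ((n + 1)! : ℝ)) (x ^ n / (n ! : ℝ)) x := by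
  refine ((hasDerivAt_pow (n + 1) x).div_const _).congr_deriv ?_
  rw [factorial_succ]
  push_cast
  field_simp

lemma hasDerivAt_sinhTail (n : ℕ) (x : ℝ) : HasDerivAt (sinhTail n) (coshTail n x) x :=
  (hasDerivAt_sinh x).sub (HasDerivAt.fun_sum fun k _ => hasDerivAt_pow_div_factorial (2 * k) x)

lemma hasDerivAt_coshTail_succ (n : ℕ) (x : ℝ) :
    HasDerivAt (coshTail (n + 1)) (sinhTail n x) x := by
  have h : coshTail (n + 1) = fun y =>
      cosh y - (∑ k ∈ range n, y ^ (2 * k + 1 + 1) / ((2 * k + 1 + 1)! : ℝ) + 1) := by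
    ext y
    simp [coshTail, sum_range_succ', mul_add]
  rw [h]
  exact (hasDerivAt_cosh x).fun_sub
    ((HasDerivAt.fun_sum fun k _ => hasDerivAt_pow_div_factorial (2 * k + 1) x).add_const 1)

lemma sinhTail_apply_zero (n : ℕ) : sinhTail n 0 = 0 := by
  simp [sinhTail]

lemma coshTail_succ_apply_zero (n : ℕ) : coshTail (n + 1) 0 = 0 := by
  simp [coshTail, sum_range_succ']

lemma contDiff_sinhTail (n : ℕ) {k : WithTop ℕ∞} : ContDiff ℝ k (sinhTail n) := by
  unfold sinhTail
  fun_prop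

lemma Gm_succ (m : ℕ) : Gm (m + 1) = fun x => sign x * (sinhTail m x / 2) := by
  ext x
  simp only [Gm, sinhTail, sinh_eq, Nat.add_sub_cancel]
  ring

lemma Gm_one : Gm 1 = fun x => sign x * (sinh x / 2) := by
  simp [Gm_succ, sinhTail]

lemma hasDerivAt_Gm_add_two (m : ℕ) (x : ℝ) :
    HasDerivAt (Gm (m + 2)) (sign x * (coshTail (m + 1) x / 2)) x := by
  rw [Gm_succ]
  exact hasDerivAt_sign_mul (fun y => (hasDerivAt_sinhTail _ y).div_const 2)
    (by simp [sinhTail_apply_zero]) (by simp [coshTail_succ_apply_zero]) x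

lemma deriv_Gm_add_two (m : ℕ) :
    deriv (Gm (m + 2)) = fun x => sign x * (coshTail (m + 1) x / 2) :=
  funext fun x => (hasDerivAt_Gm_add_two m x).deriv

lemma hasDerivAt_deriv_Gm_add_two (m : ℕ) (x : ℝ) :
    HasDerivAt (deriv (Gm (m + 2))) (Gm (m + 1) x) x := by
  rw [deriv_Gm_add_two, Gm_succ]
  exact hasDerivAt_sign_mul (fun y => (hasDerivAt_coshTail_succ _ y).div_const 2)
    (by simp [coshTail_succ_apply_zero]) (by simp [sinhTail_apply_zero]) x

lemma deriv_deriv_Gm_add_two (m : ℕ) : deriv (deriv (Gm (m + 2))) = Gm (m + 1) :=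
  funext fun x => (hasDerivAt_deriv_Gm_add_two m x).deriv

lemma contDiff_Gm (m : ℕ) : ContDiff ℝ (2 * m : ℕ) (Gm (m + 1)) := by
  induction m with
  | zero =>
    rw [Gm_succ]
    exact contDiff_zero.2 <| continuous_sign_mul
      ((contDiff_sinhTail 0 (k := 0)).continuous.div_const 2) (by simp [sinhTail_apply_zero])
  | succ m ih =>
    show ContDiff ℝ _ (Gm (m + 2))
    have h : ((2 * (m + 1) : ℕ) : WithTop ℕ∞) = (2 * m : ℕ) + 1 + 1 := by push_cast; ring
    rw [h, contDiff_succ_iff_deriv, contDiff_succ_iff_deriv, deriv_deriv_Gm_add_two]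
    exact ⟨fun x => (hasDerivAt_Gm_add_two m x).differentiableAt,
      fun h => (WithTop.natCast_ne_top _ h).elim,
      fun x => (hasDerivAt_deriv_Gm_add_two m x).differentiableAt,
      fun h => (WithTop.natCast_ne_top _ h).elim, ih⟩

lemma contDiffOn_Gm (m : ℕ) : ContDiffOn ℝ (⊤ : ℕ∞) (Gm (m + 1)) {x | x ≠ 0} := by
  intro x hx
  rw [Gm_succ]
  exact (contDiffAt_sign_mul_of_ne ((contDiff_sinhTail m).div_const 2).contDiffAt
    hx).contDiffWithinAt

lemma iteratedDeriv_Gm (m j : ℕ) :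
    iteratedDeriv (2 * m + j) (Gm (m + 1)) = iteratedDeriv j (Gm 1) := by
  induction m with
  | zero => simp
  | succ m ih =>
    show iteratedDeriv _ (Gm (m + 2)) = _
    rw [show 2 * (m + 1) + j = 2 * m + j + 1 + 1 by ring, iteratedDeriv_succ', iteratedDeriv_succ',
      deriv_deriv_Gm_add_two, ih]

lemma deriv_Gm_one_of_ne {x : ℝ} (hx : x ≠ 0) : deriv (Gm 1) x = sign x * (cosh x / 2) := by
  rw [Gm_one]
  exact (hasDerivAt_sign_mul_of_ne ((hasDerivAt_sinh x).div_const 2) hx).deriv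

lemma iteratedDeriv_two_Gm_one {x : ℝ} (hx : x ≠ 0) : iteratedDeriv 2 (Gm 1) x = Gm 1 x := by
  have h : deriv (Gm 1) =ᶠ[𝓝 x] fun y => sign y * (cosh y / 2) :=
    (eventually_ne_nhds hx).mono fun y hy => deriv_Gm_one_of_ne hy
  rw [iteratedDeriv_succ, iteratedDeriv_one, h.deriv_eq, Gm_one]
  exact (hasDerivAt_sign_mul_of_ne ((hasDerivAt_cosh x).div_const 2) hx).deriv

lemma tendsto_deriv_Gm_one_nhdsGT : Tendsto (deriv (Gm 1)) (𝓝[>] 0) (𝓝 (1 / 2)) := by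
  have h := tendsto_sign_mul_nhdsGT (f := fun x => cosh x / 2) (by fun_prop)
  rw [cosh_zero] at h
  refine h.congr' ?_
  filter_upwards [self_mem_nhdsWithin] with x hx using (deriv_Gm_one_of_ne hx.ne').symm

lemma tendsto_deriv_Gm_one_nhdsLT : Tendsto (deriv (Gm 1)) (𝓝[<] 0) (𝓝 (-(1 / 2))) := by
  have h := tendsto_sign_mul_nhdsLT (f := fun x => cosh x / 2) (by fun_prop)
  rw [cosh_zero] at h
  refine h.congr' ?_
  filter_upwards [self_mem_nhdsWithin] with x hx using (deriv_Gm_one_of_ne hx.ne).symm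

/-- For every `m ≥ 1`: `G_m` is `(2m−2)`-times continuously differentiable on `ℝ`; it is
infinitely differentiable away from `0` and satisfies `G_m^{(2m)} = G_m^{(2m−2)}` there;
and its `(2m−1)`st derivative has a jump of size `1` at the origin.  Thus `G_m` is a
fundamental solution of `d^{2m}/dx^{2m} − d^{2m−2}/dx^{2m−2}`. -/
theorem Gm_fundamental_solution (m : ℕ) (hm : 1 ≤ m) :
    ContDiff ℝ ((2 * m - 2 : ℕ) : ℕ∞) (Gm m) ∧
    ContDiffOn ℝ ((⊤ : ℕ∞) : ℕ∞) (Gm m) {x : ℝ | x ≠ 0} ∧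
    (∀ x : ℝ, x ≠ 0 →
      iteratedDeriv (2 * m) (Gm m) x = iteratedDeriv (2 * m - 2) (Gm m) x) ∧
    (∃ a b : ℝ,
      Filter.Tendsto (iteratedDeriv (2 * m - 1) (Gm m))
        (nhdsWithin 0 (Set.Ioi 0)) (nhds a) ∧
      Filter.Tendsto (iteratedDeriv (2 * m - 1) (Gm m))
        (nhdsWithin 0 (Set.Iio 0)) (nhds b) ∧
      a - b = 1) := by
  obtain ⟨m, rfl⟩ : ∃ n, m = n + 1 := ⟨m - 1, by omega⟩
  have h2 : 2 * (m + 1) - 2 = 2 * m + 0 := by omega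
  have h1 : 2 * (m + 1) - 1 = 2 * m + 1 := by omega
  refine ⟨?_, contDiffOn_Gm m, fun x hx => ?_, 1 / 2, -(1 / 2), ?_, ?_, by norm_num⟩
  · exact h2 ▸ contDiff_Gm m
  · rw [h2, show 2 * (m + 1) = 2 * m + 2 by ring, iteratedDeriv_Gm, iteratedDeriv_Gm,
      iteratedDeriv_two_Gm_one hx, iteratedDeriv_zero]
  · rw [h1, iteratedDeriv_Gm, iteratedDeriv_one]
    exact tendsto_deriv_Gm_one_nhdsGT
  · rw [h1, iteratedDeriv_Gm, iteratedDeriv_one]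
    exact tendsto_deriv_Gm_one_nhdsLT
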